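/- Let s ∈ (0, √2) be such that f^(k)(s) ≠ 0 for every k ≥ 0; then each s_k := f^(k)(s) lies in (0, √2), and there is a unique i_k ∈ ℤ with s_k ∈ I_{i_k}. Set σ_k = 1 if i_k ≥ 0 and σ_k = −1 if i_k < 0; set π_0 = √2 if i_0 ≥ 0 and π_0 = 0 if i_0 < 0; for n ≥ 1 set a_n = c_n · ∏_{k=0}^{n−1} σ_k, where c_n = 1 if i_n ≥ 0 and c_n = ω if i_n < 0, and set b_n = Σ_{k=0}^{n−1} |i_k|. Then the series Σ_{n≥1} a_n·β^{n+b_n} converges absolutely, and s = π_0 − Σ_{n≥1} a_n·β^{n+b_n}. -/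

import Mathlib

noncomputable section

/-- `β = √2 - 1`. -/
def β : ℝ := Real.sqrt 2 - 1

/-- `ω = √2 + 1`. -/
def ω : ℝ := Real.sqrt 2 + 1

/-- The break points `Δ_i`. -/
def Δ (i : ℤ) : ℝ :=
  if i < 0 then β ^ i.natAbs
  else if i = 0 then β
  else Real.sqrt 2 - β ^ i.natAbs

/-- The intervals `I_i`. -/
def Iint (i : ℤ) : Set ℝ :=
  if i < 0 then Set.Ioc (Δ (i - 1)) (Δ i)
  else if i = 0 then Set.Ioo β 1
  else Set.Ico (Δ i) (Δ (i + 1))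

/-- The defining formula of `f` on the interval `I_i`. -/
def fval (i : ℤ) (s : ℝ) : ℝ :=
  if i < 0 then ω ^ (i.natAbs + 1) * (Δ i - s)
  else if i = 0 then ω * (s - β)
  else ω ^ (i.natAbs + 1) * (s - Δ i)

/-- `f` is the renormalization map: `f 0 = f √2 = 0` and on each interval `I_i`
    it is given by the corresponding affine formula. These conditions determine
    `f` uniquely on `[0, √2]`. -/
def IsLuroth (f : ℝ → ℝ) : Prop :=
  f 0 = 0 ∧ f (Real.sqrt 2) = 0 ∧ ∀ i : ℤ, ∀ s ∈ Iint i, f s = fval i s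

/-- `ℚ(√2)` as a subset of `ℝ`. -/
def QSqrt2 : Set ℝ := {x | ∃ a b : ℚ, x = (a : ℝ) + (b : ℝ) * Real.sqrt 2}

/-- `ℤ[√2]` as a subset of `ℝ`. -/
def ZSqrt2 : Set ℝ := {x | ∃ m n : ℤ, x = (m : ℝ) + (n : ℝ) * Real.sqrt 2}

/-- `M_d = {s ∈ [0,√2] : d·s ∈ ℤ[√2]}`. -/
def Mset (d : ℤ) : Set ℝ :=
  {s | s ∈ Set.Icc 0 (Real.sqrt 2) ∧ (d : ℝ) * s ∈ ZSqrt2}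

/-
Let `π_i` be the endpoint of `[0, √2]` at which the intervals `I_i` accumulate (`0` for `i < 0`,
`√2` for `i ≥ 0`) and `σ_i = ∓1` accordingly. Then `I_i` consists of points whose signed distance
`σ_i (π_i - x)` to `π_i` lies in `(β^{|i|+1}, β^{|i|}]`, which makes the `I_i` disjoint, and on
`I_i` the map is `f x = ω + σ_i ω^{|i|+1} (x - π_i)`, which therefore lands in `[0, √2)`.
Equivalently `x - π_i = σ_i β^{|i|+1} (f x - ω)`; as `ω - π_j = c_j`, this recurrence for
`e_k = s_k - π_{i_k}` telescopes: the `N`-th partial sum of the series is `P_N e_N - e_0` with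
`P_N = ∏_{k<N} σ_{i_k} β^{|i_k|+1}`. Since `|P_N| ≤ β^N` and `|e_N| ≤ 1`, the remainder tends
to `0`.
-/

open Finset Filter Topology

theorem Finset.sum_range_prod_mul_eq_of_eq_mul_sub {R : Type*} [CommRing R]
    {e r t : ℕ → R} (h : ∀ n, e n = r n * (e (n + 1) - t n)) (N : ℕ) :
    ∑ n ∈ range N, (∏ k ∈ range (n + 1), r k) * t n = (∏ k ∈ range N, r k) * e N - e 0 := by
  induction N with
  | zero => simp
  | succ N ih =>
    rw [sum_range_succ, ih, prod_range_succ, h N]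
    ring

theorem tendsto_sum_range_prod_mul_of_eq_mul_sub {R : Type*} [CommRing R] [TopologicalSpace R]
    [ContinuousSub R] {e r t : ℕ → R} (h : ∀ n, e n = r n * (e (n + 1) - t n))
    (hlim : Tendsto (fun N => (∏ k ∈ range N, r k) * e N) atTop (𝓝 0)) :
    Tendsto (fun N => ∑ n ∈ range N, (∏ k ∈ range (n + 1), r k) * t n) atTop (𝓝 (-e 0)) := by
  simp_rw [sum_range_prod_mul_eq_of_eq_mul_sub h]
  simpa using hlim.sub_const (e 0)

namespace Luroth

lemma β_pos : 0 < β := by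
  unfold β; linarith [Real.one_lt_sqrt_two]

lemma β_lt_one : β < 1 := by
  unfold β; linarith [Real.sqrt_two_lt_three_halves]

lemma ω_pos : 0 < ω := by
  unfold ω; positivity

lemma β_mul_ω : β * ω = 1 := by
  unfold β ω; nlinarith [Real.mul_self_sqrt (show (0 : ℝ) ≤ 2 by norm_num)]

lemma β_pow_mul_ω_pow (n : ℕ) : β ^ n * ω ^ n = 1 := by
  rw [← mul_pow, β_mul_ω, one_pow]

lemma β_pow_le_β_pow {m n : ℕ} (h : m ≤ n) : β ^ n ≤ β ^ m :=
  pow_le_pow_of_le_one β_pos.le β_lt_one.le h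

lemma eq_of_mem_Ioc_pow_succ_pow {a x : ℝ} (ha₀ : 0 < a) (ha₁ : a < 1) {m n : ℕ}
    (hm : x ∈ Set.Ioc (a ^ (m + 1)) (a ^ m)) (hn : x ∈ Set.Ioc (a ^ (n + 1)) (a ^ n)) :
    m = n := by
  have key : ∀ {m n : ℕ}, x ∈ Set.Ioc (a ^ (m + 1)) (a ^ m) →
      x ∈ Set.Ioc (a ^ (n + 1)) (a ^ n) → ¬ m < n := fun hm hn hlt =>
    (hn.2.trans (pow_le_pow_of_le_one ha₀.le ha₁.le hlt)).not_gt hm.1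
  by_contra hne
  rcases Nat.lt_or_gt_of_ne hne with hlt | hlt
  exacts [key hm hn hlt, key hn hm hlt]

lemma Iint_of_neg {i : ℤ} (hi : i < 0) :
    Iint i = Set.Ioc (β ^ (i.natAbs + 1)) (β ^ i.natAbs) := by
  simp only [Iint, Δ, if_pos hi, if_pos (show i - 1 < 0 by omega)]
  congr 2; omega

lemma Iint_zero : Iint 0 = Set.Ioo β 1 := by
  simp [Iint]

lemma Iint_of_pos {i : ℤ} (hi : 0 < i) :
    Iint i = Set.Ico (Real.sqrt 2 - β ^ i.natAbs) (Real.sqrt 2 - β ^ (i.natAbs + 1)) := by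
  simp only [Iint, Δ, if_neg (show ¬ i < 0 by omega), if_neg (show i ≠ 0 by omega),
    if_neg (show ¬ i + 1 < 0 by omega), if_neg (show i + 1 ≠ 0 by omega)]
  congr 3; omega

def endpoint (i : ℤ) : ℝ := if i < 0 then 0 else Real.sqrt 2

def orient (i : ℤ) : ℝ := if i < 0 then -1 else 1

def ratio (i : ℤ) : ℝ := orient i * β ^ (i.natAbs + 1)

lemma orient_mul_self (i : ℤ) : orient i * orient i = 1 := by
  unfold orient; split_ifs <;> norm_num

lemma fval_eq (i : ℤ) (x : ℝ) :
    fval i x = ω + orient i * ω ^ (i.natAbs + 1) * (x - endpoint i) := by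
  have hβω := β_pow_mul_ω_pow i.natAbs
  rcases lt_trichotomy i 0 with hi | rfl | hi
  · simp only [fval, orient, endpoint, Δ, if_pos hi]
    linear_combination ω * hβω
  · simp only [fval, orient, endpoint, lt_irrefl, if_false, if_true, Int.natAbs_zero, zero_add,
      pow_one]
    unfold β; ring
  · simp only [fval, orient, endpoint, Δ, if_neg (show ¬ i < 0 by omega),
      if_neg (show i ≠ 0 by omega)]
    linear_combination ω * hβω

lemma sub_endpoint_eq (i : ℤ) (x : ℝ) : x - endpoint i = ratio i * (fval i x - ω) := by
  rw [fval_eq, ratio]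
  linear_combination -(x - endpoint i) * orient_mul_self i
    - (x - endpoint i) * orient i * orient i * β_pow_mul_ω_pow (i.natAbs + 1)

lemma orient_mul_endpoint_sub_mem {i : ℤ} {x : ℝ} (hx : x ∈ Iint i) :
    orient i * (endpoint i - x) ∈ Set.Ioc (β ^ (i.natAbs + 1)) (β ^ i.natAbs) := by
  rcases lt_trichotomy i 0 with hi | rfl | hi
  · rw [Iint_of_neg hi] at hx
    simpa [orient, endpoint, hi] using hx
  · rw [Iint_zero] at hx
    simp only [orient, endpoint, lt_irrefl, if_false, one_mul, Int.natAbs_zero, zero_add, pow_one,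
      pow_zero, Set.mem_Ioc]
    unfold β at hx ⊢
    constructor <;> linarith [hx.1, hx.2]
  · rw [Iint_of_pos hi] at hx
    simp only [orient, endpoint, if_neg (show ¬ i < 0 by omega), one_mul, Set.mem_Ioc]
    constructor <;> linarith [hx.1, hx.2]

lemma le_β_of_mem_Iint {i : ℤ} (hi : i < 0) {x : ℝ} (hx : x ∈ Iint i) : x ≤ β := by
  rw [Iint_of_neg hi] at hx
  simpa using hx.2.trans (β_pow_le_β_pow (show 1 ≤ i.natAbs by omega))

lemma β_lt_of_mem_Iint {i : ℤ} (hi : 0 ≤ i) {x : ℝ} (hx : x ∈ Iint i) : β < x := by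
  rcases hi.eq_or_lt with rfl | hi
  · rw [Iint_zero] at hx
    exact hx.1
  · rw [Iint_of_pos hi] at hx
    have hpow : β ^ i.natAbs ≤ β ^ 1 := β_pow_le_β_pow (show 1 ≤ i.natAbs by omega)
    rw [pow_one] at hpow
    have hβ : β < Real.sqrt 2 - β := by unfold β; linarith [Real.sqrt_two_lt_three_halves]
    linarith [hx.1]

lemma eq_of_mem_Iint {x : ℝ} {i j : ℤ} (hi : x ∈ Iint i) (hj : x ∈ Iint j) : i = j := by
  have hsign : i < 0 ↔ j < 0 := by
    constructor <;> intro h <;> by_contra h'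
    · exact (le_β_of_mem_Iint h hi).not_gt (β_lt_of_mem_Iint (not_lt.mp h') hj)
    · exact (le_β_of_mem_Iint h hj).not_gt (β_lt_of_mem_Iint (not_lt.mp h') hi)
  have hdist := orient_mul_endpoint_sub_mem hj
  have hsame : orient j * (endpoint j - x) = orient i * (endpoint i - x) := by
    simp only [orient, endpoint, hsign]
  rw [hsame] at hdist
  have := eq_of_mem_Ioc_pow_succ_pow β_pos β_lt_one (orient_mul_endpoint_sub_mem hi) hdist
  omega

lemma exists_mem_Ioc_β_pow {y : ℝ} (hy₀ : 0 < y) (hy : y ≤ β) :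
    ∃ n : ℕ, 0 < n ∧ y ∈ Set.Ioc (β ^ (n + 1)) (β ^ n) := by
  obtain ⟨n, hlt, hle⟩ :=
    exists_nat_pow_near_of_lt_one hy₀ (hy.trans β_lt_one.le) β_pos β_lt_one
  refine ⟨n, Nat.pos_of_ne_zero ?_, hlt, hle⟩
  rintro rfl
  exact hlt.not_ge (by simpa using hy)

lemma exists_mem_Iint {x : ℝ} (hx : x ∈ Set.Ioo 0 (Real.sqrt 2)) : ∃ i : ℤ, x ∈ Iint i := by
  by_cases hxβ : x ≤ β
  · obtain ⟨n, hn, hmem⟩ := exists_mem_Ioc_β_pow hx.1 hxβ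
    refine ⟨-n, ?_⟩
    rwa [Iint_of_neg (by omega), Int.natAbs_neg, Int.natAbs_natCast]
  by_cases hx1 : x < 1
  · exact ⟨0, Iint_zero ▸ ⟨not_le.mp hxβ, hx1⟩⟩
  have hy : Real.sqrt 2 - x ≤ β := by unfold β; linarith
  obtain ⟨n, hn, hlt, hle⟩ := exists_mem_Ioc_β_pow (sub_pos.mpr hx.2) hy
  refine ⟨n, ?_⟩
  rw [Iint_of_pos (by omega), Int.natAbs_natCast]
  constructor <;> linarith

lemma abs_orient (i : ℤ) : |orient i| = 1 := by
  unfold orient; split_ifs <;> norm_num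

lemma abs_sub_endpoint_le_one {i : ℤ} {x : ℝ} (hx : x ∈ Iint i) : |x - endpoint i| ≤ 1 := by
  obtain ⟨hlo, hhi⟩ := orient_mul_endpoint_sub_mem hx
  have hdist : |x - endpoint i| = orient i * (endpoint i - x) := by
    rw [← abs_of_pos ((pow_pos β_pos _).trans hlo), abs_mul, abs_orient, one_mul, abs_sub_comm]
  rw [hdist]
  exact hhi.trans (pow_le_one₀ β_pos.le β_lt_one.le)

lemma abs_ratio_le (i : ℤ) : |ratio i| ≤ β := by
  rw [ratio, abs_mul, abs_orient, one_mul, abs_of_pos (pow_pos β_pos _)]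
  simpa using β_pow_le_β_pow (Nat.le_add_left 1 i.natAbs)

lemma abs_prod_ratio_le (idx : ℕ → ℤ) (n : ℕ) : |∏ k ∈ range n, ratio (idx k)| ≤ β ^ n := by
  rw [abs_prod]
  calc ∏ k ∈ range n, |ratio (idx k)| ≤ ∏ _k ∈ range n, β :=
        prod_le_prod (fun _ _ => abs_nonneg _) (fun k _ => abs_ratio_le (idx k))
    _ = β ^ n := by rw [prod_const, card_range]

lemma abs_ω_sub_endpoint_le (i : ℤ) : |ω - endpoint i| ≤ ω := by
  have hω : Real.sqrt 2 < ω := by unfold ω; linarith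
  unfold endpoint
  split_ifs
  · rw [sub_zero, abs_of_pos ω_pos]
  · rw [abs_of_pos (sub_pos.mpr hω)]; linarith [Real.sqrt_nonneg 2]

/-- The `n`-th summand `a_{n+1} β^{(n+1) + b_{n+1}}` of the expansion (indexed from `0`). -/
def lurothTerm (idx : ℕ → ℤ) (n : ℕ) : ℝ :=
  (if idx (n + 1) < 0 then ω else 1) * (∏ k ∈ range (n + 1), orient (idx k)) *
    β ^ ((n + 1) + ∑ k ∈ range (n + 1), (idx k).natAbs)

lemma lurothTerm_eq (idx : ℕ → ℤ) (n : ℕ) :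
    lurothTerm idx n = (∏ k ∈ range (n + 1), ratio (idx k)) * (ω - endpoint (idx (n + 1))) := by
  simp only [lurothTerm, ratio, prod_mul_distrib, prod_pow_eq_pow_sum, sum_add_distrib, sum_const,
    card_range, smul_eq_mul, mul_one, endpoint]
  split_ifs
  · ring
  · unfold ω; ring

lemma abs_lurothTerm_le (idx : ℕ → ℤ) (n : ℕ) : |lurothTerm idx n| ≤ β ^ n :=
  calc |lurothTerm idx n| ≤ β ^ (n + 1) * ω := by
        rw [lurothTerm_eq, abs_mul]
        exact mul_le_mul (abs_prod_ratio_le idx _) (abs_ω_sub_endpoint_le _) (abs_nonneg _)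
          (pow_nonneg β_pos.le _)
    _ = β ^ n := by rw [pow_succ, mul_assoc, β_mul_ω, mul_one]

lemma summable_abs_lurothTerm (idx : ℕ → ℤ) : Summable fun n => |lurothTerm idx n| :=
  (summable_geometric_of_lt_one β_pos.le β_lt_one).of_nonneg_of_le (fun _ => abs_nonneg _)
    (abs_lurothTerm_le idx)

end Luroth

namespace IsLuroth

open Luroth

lemma apply_mem_Ico {f : ℝ → ℝ} (hf : IsLuroth f) {i : ℤ} {x : ℝ} (hx : x ∈ Iint i) :
    f x ∈ Set.Ico 0 (Real.sqrt 2) := by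
  obtain ⟨hlo, hhi⟩ := orient_mul_endpoint_sub_mem hx
  have hω := pow_pos ω_pos (i.natAbs + 1)
  have hfx : f x = ω - ω ^ (i.natAbs + 1) * (orient i * (endpoint i - x)) := by
    rw [hf.2.2 i x hx, fval_eq]; ring
  have hlo' : 1 < ω ^ (i.natAbs + 1) * (orient i * (endpoint i - x)) := by
    calc (1 : ℝ) = ω ^ (i.natAbs + 1) * β ^ (i.natAbs + 1) := by
          rw [mul_comm, β_pow_mul_ω_pow]
      _ < _ := mul_lt_mul_of_pos_left hlo hω
  have hhi' : ω ^ (i.natAbs + 1) * (orient i * (endpoint i - x)) ≤ ω := by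
    calc _ ≤ ω ^ (i.natAbs + 1) * β ^ i.natAbs := mul_le_mul_of_nonneg_left hhi hω.le
      _ = ω := by linear_combination ω * β_pow_mul_ω_pow i.natAbs
  rw [hfx]
  constructor
  · linarith
  · unfold ω at hlo' ⊢; linarith

lemma iterate_mem_Ioo {f : ℝ → ℝ} (hf : IsLuroth f) {s : ℝ}
    (hs : s ∈ Set.Ioo 0 (Real.sqrt 2)) (hne : ∀ k : ℕ, f^[k] s ≠ 0) :
    ∀ k : ℕ, f^[k] s ∈ Set.Ioo 0 (Real.sqrt 2)
  | 0 => hs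
  | k + 1 => by
    obtain ⟨i, hi⟩ := exists_mem_Iint (hf.iterate_mem_Ioo hs hne k)
    have hmem := hf.apply_mem_Ico hi
    rw [← Function.iterate_succ_apply' f k s] at hmem
    exact ⟨hmem.1.lt_of_ne' (hne (k + 1)), hmem.2⟩

theorem hasSum_lurothTerm {f : ℝ → ℝ} (hf : IsLuroth f) {s : ℝ} {idx : ℕ → ℤ}
    (hidx : ∀ k : ℕ, f^[k] s ∈ Iint (idx k)) :
    HasSum (lurothTerm idx) (endpoint (idx 0) - s) := by
  set e : ℕ → ℝ := fun n => f^[n] s - endpoint (idx n)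
  have hrec : ∀ n, e n = ratio (idx n) * (e (n + 1) - (ω - endpoint (idx (n + 1)))) := by
    intro n
    simp only [e, Function.iterate_succ_apply', sub_sub_sub_cancel_right]
    rw [hf.2.2 _ _ (hidx n)]
    exact sub_endpoint_eq _ _
  have hlim : Tendsto (fun N => (∏ k ∈ range N, ratio (idx k)) * e N) atTop (𝓝 0) := by
    refine squeeze_zero_norm (fun N => ?_)
      (tendsto_pow_atTop_nhds_zero_of_lt_one β_pos.le β_lt_one)
    rw [Real.norm_eq_abs, abs_mul, ← mul_one (β ^ N)]
    exact mul_le_mul (abs_prod_ratio_le idx N) (abs_sub_endpoint_le_one (hidx N)) (abs_nonneg _)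
      (pow_nonneg β_pos.le _)
  have hsum : Summable fun n => ‖lurothTerm idx n‖ := by
    simpa only [Real.norm_eq_abs] using summable_abs_lurothTerm idx
  rw [hasSum_iff_tendsto_nat_of_summable_norm hsum]
  simpa [e, lurothTerm_eq] using tendsto_sum_range_prod_mul_of_eq_mul_sub hrec hlim

end IsLuroth

/-- the Lüroth expansion. If `s ∈ (0,√2)` has `f^[k] s ≠ 0` for
all `k`, then every iterate lies in `(0,√2)` and belongs to a unique interval
`I_{i_k}`; moreover, for any itinerary `idx` (i.e. `f^[k] s ∈ I_{idx k}`), the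
series `∑_{n ≥ 1} a_n β^(n + b_n)` converges absolutely and
`s = π₀ - ∑_{n ≥ 1} a_n β^(n + b_n)`, where `a_n = c_n ∏_{k<n} σ_k`,
`c_n = ω` if `idx n < 0` and `1` otherwise, `σ_k = -1` if `idx k < 0` and `1`
otherwise, `b_n = ∑_{k<n} |idx k|`, and `π₀ = 0` if `idx 0 < 0`, `√2`
otherwise. -/
theorem luroth_expansion (f : ℝ → ℝ) (hf : IsLuroth f)
    (s : ℝ) (hs : s ∈ Set.Ioo (0 : ℝ) (Real.sqrt 2))
    (hne : ∀ k : ℕ, f^[k] s ≠ 0) :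
    (∀ k : ℕ, f^[k] s ∈ Set.Ioo (0 : ℝ) (Real.sqrt 2)) ∧
    (∀ k : ℕ, ∃! i : ℤ, f^[k] s ∈ Iint i) ∧
    (∀ idx : ℕ → ℤ, (∀ k : ℕ, f^[k] s ∈ Iint (idx k)) →
      Summable (fun n : ℕ =>
        |(if idx (n + 1) < 0 then ω else 1) *
            (∏ k ∈ Finset.range (n + 1), (if idx k < 0 then (-1 : ℝ) else 1)) *
            β ^ ((n + 1) + ∑ k ∈ Finset.range (n + 1), (idx k).natAbs)|) ∧
      s = (if idx 0 < 0 then (0 : ℝ) else Real.sqrt 2) -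
        ∑' n : ℕ,
          (if idx (n + 1) < 0 then ω else 1) *
            (∏ k ∈ Finset.range (n + 1), (if idx k < 0 then (-1 : ℝ) else 1)) *
            β ^ ((n + 1) + ∑ k ∈ Finset.range (n + 1), (idx k).natAbs)) := by
  have hmem := hf.iterate_mem_Ioo hs hne
  refine ⟨hmem, fun k => ?_, fun idx hidx => ⟨Luroth.summable_abs_lurothTerm idx, ?_⟩⟩
  · obtain ⟨i, hi⟩ := Luroth.exists_mem_Iint (hmem k)
    exact ⟨i, hi, fun j hj => Luroth.eq_of_mem_Iint hj hi⟩
  · have hsum := (hf.hasSum_lurothTerm hidx).tsum_eq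
    change s = Luroth.endpoint (idx 0) - ∑' n, Luroth.lurothTerm idx n
    linarith
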